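/- Fix ε with 0 < ε < 1 and an integer δ ≥ 1, and assume the following uniform abc conjecture (Masser's form): there exists a real number κ (depending only on ε and δ) such that for every number field L with [L:ℚ] ≤ δ and all a, b, c ∈ L ∖ {0} with a + b = c, one has h_L(a:b:c) ≤ (1+ε)·rad_L(a:b:c) + 2·log d_L + κ. Then for every number field L with [L:ℚ] ≤ δ, every finite set S of nonzero prime ideals of O_L, and every u ∈ L ∖ {0,1} such that both u and 1 − u are S-units, one has h_L(u:1) ≤ (1/(1−ε))·∑_{𝔮 ∈ S} log N(𝔮) + (2/(1−ε))·log d_L + κ. (This is the instance, for U = ℙ¹ ∖ {0,1,∞} with χ(U) = −1, of the paper's remark that a discriminant-explicit abc conjecture yields the bound with γ = −(2/(ε+χ(U)))·log d_L + κ.) -/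

import Mathlib

open NumberField IsDedekindDomain

/-- The additive `𝔭`-adic valuation `v_𝔭(x)` of `x ∈ K^×`, extended by `0` at `x = 0`. -/
noncomputable def vIntK (K : Type) [Field K] [NumberField K]
    (v : HeightOneSpectrum (𝓞 K)) (x : K) : ℤ :=
  if h : v.valuation K x = 0 then 0 else -Multiplicative.toAdd (WithZero.unzero h)

/-- `log N(𝔭)`, the logarithm of the absolute norm of the prime ideal `𝔭`. -/
noncomputable def logNormK (K : Type) [Field K] [NumberField K]
    (v : HeightOneSpectrum (𝓞 K)) : ℝ :=
  Real.log (Ideal.absNorm v.asIdeal)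

/-- The relative height `h_K(x₀:x₁:x₂) = ∑_v d_v log max_i |x_i|_v`: the archimedean part is a
sum over the infinite places weighted by the local degrees `mult w`, and at a finite place `𝔭`
one has `d_𝔭 · log max_i |x_i|_𝔭 = (max_i (-v_𝔭(x_i))) · log N(𝔭)`. -/
noncomputable def heightProjK (K : Type) [Field K] [NumberField K] (x₀ x₁ x₂ : K) : ℝ :=
  (∑ w : InfinitePlace K, (w.mult : ℝ) * Real.log (max (w x₀) (max (w x₁) (w x₂))))
    + ∑ᶠ v : HeightOneSpectrum (𝓞 K),
        ((max (-(vIntK K v x₀)) (max (-(vIntK K v x₁)) (-(vIntK K v x₂))) : ℤ) : ℝ)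
          * logNormK K v

/-- The relative height `h_K(u:1) = ∑_v d_v log max (|u|_v, 1)`. -/
noncomputable def height1K (K : Type) [Field K] [NumberField K] (u : K) : ℝ :=
  (∑ w : InfinitePlace K, (w.mult : ℝ) * Real.log (max (w u) 1))
    + ∑ᶠ v : HeightOneSpectrum (𝓞 K), ((max (-(vIntK K v u)) 0 : ℤ) : ℝ) * logNormK K v

/-- The radical `rad(x₀:x₁:x₂) = ∑ log N(𝔭)`, summed over the nonzero prime ideals `𝔭` for
which the set `{v_𝔭(x₀), v_𝔭(x₁), v_𝔭(x₂)}` has at least two elements. -/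
noncomputable def radK (K : Type) [Field K] [NumberField K] (x₀ x₁ x₂ : K) : ℝ :=
  ∑ᶠ v : HeightOneSpectrum (𝓞 K),
    if 2 ≤ ({vIntK K v x₀, vIntK K v x₁, vIntK K v x₂} : Finset ℤ).card
    then logNormK K v else 0

/-- `log d_K`, the logarithm of the absolute value of the discriminant of `K`. -/
noncomputable def logDiscK (K : Type) [Field K] [NumberField K] : ℝ :=
  Real.log |(NumberField.discr K : ℝ)|

/-!
Apply the abc hypothesis to `u + (1 - u) = 1`. Since `u` and `1 - u` are `S`-units, at every
prime outside `S` all three valuations vanish, so the radical is at most `∑_{𝔮 ∈ S} log N(𝔮)`;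
and `h(u:1) ≤ h(u:1-u:1)`, since adding a coordinate only raises every local maximum. The
constants then only grow, as `1 + ε ≤ 1/(1-ε)` and `2 ≤ 2/(1-ε)`.
-/

/-- `0` also satisfies this, because `vIntK` is `0` at `0`. -/
def IsSUnitK {K : Type} [Field K] [NumberField K] (S : Finset (HeightOneSpectrum (𝓞 K)))
    (u : K) : Prop :=
  ∀ v, v ∉ S → vIntK K v u = 0

section

variable {K : Type} [Field K] [NumberField K]

lemma vIntK_one (v : HeightOneSpectrum (𝓞 K)) : vIntK K v 1 = 0 := by
  simp only [vIntK, map_one, one_ne_zero, ↓reduceDIte, WithZero.unzero_coe, neg_eq_zero,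
    toAdd_eq_zero]
  rfl

lemma logNormK_nonneg (v : HeightOneSpectrum (𝓞 K)) : 0 ≤ logNormK K v :=
  Real.log_nonneg <| by exact_mod_cast Nat.one_le_iff_ne_zero.mpr <|
    (Ideal.absNorm_eq_zero_iff.not).mpr v.ne_bot

variable (K) in
lemma logDiscK_nonneg : 0 ≤ logDiscK K :=
  Real.log_nonneg <| by
    rw [← Int.cast_abs]
    exact_mod_cast Int.one_le_abs (NumberField.discr_ne_zero K)

variable {S : Finset (HeightOneSpectrum (𝓞 K))} {u : K}

lemma height1K_eq_of_isSUnitK (hu : IsSUnitK S u) :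
    height1K K u = (∑ w : InfinitePlace K, (w.mult : ℝ) * Real.log (max (w u) 1))
      + ∑ v ∈ S, ((max (-(vIntK K v u)) 0 : ℤ) : ℝ) * logNormK K v := by
  rw [height1K, finsum_eq_sum_of_support_subset]
  intro v hv
  by_contra hvS
  simp [hu v hvS] at hv

lemma heightProjK_one_sub_one_eq_of_isSUnitK (hu : IsSUnitK S u) (hu' : IsSUnitK S (1 - u)) :
    heightProjK K u (1 - u) 1
      = (∑ w : InfinitePlace K, (w.mult : ℝ) * Real.log (max (w u) (max (w (1 - u)) 1)))
        + ∑ v ∈ S, ((max (-(vIntK K v u)) (max (-(vIntK K v (1 - u))) 0) : ℤ) : ℝ)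
            * logNormK K v := by
  simp only [heightProjK, map_one, vIntK_one, neg_zero]
  rw [finsum_eq_sum_of_support_subset]
  intro v hv
  by_contra hvS
  simp [hu v hvS, hu' v hvS] at hv

lemma height1K_le_heightProjK_one_sub_one (hu : IsSUnitK S u) (hu' : IsSUnitK S (1 - u)) :
    height1K K u ≤ heightProjK K u (1 - u) 1 := by
  rw [height1K_eq_of_isSUnitK hu, heightProjK_one_sub_one_eq_of_isSUnitK hu hu']
  gcongr with w _ v _
  · exact le_max_right _ _
  · exact logNormK_nonneg v
  · exact le_max_right _ _

lemma radK_one_sub_one_le_sum_logNormK (hu : IsSUnitK S u) (hu' : IsSUnitK S (1 - u)) :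
    radK K u (1 - u) 1 ≤ ∑ v ∈ S, logNormK K v := by
  rw [radK, finsum_eq_sum_of_support_subset]
  · refine Finset.sum_le_sum fun v _ => ?_
    split_ifs
    exacts [le_rfl, logNormK_nonneg v]
  · intro v hv
    by_contra hvS
    simp [hu v hvS, hu' v hvS, vIntK_one] at hv

end

lemma one_add_le_one_div_one_sub {ε : ℝ} (hε : ε < 1) : 1 + ε ≤ 1 / (1 - ε) := by
  rw [le_div_iff₀ (by linarith)]
  nlinarith [sq_nonneg ε]

theorem uniform_abc_implies_effective_siegel_general
    (ε : ℝ) (hε0 : 0 < ε) (hε1 : ε < 1) (δ : ℕ) (κ : ℝ)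
    (habc : ∀ (L : Type) [Field L] [NumberField L], Module.finrank ℚ L ≤ δ →
      ∀ a b c : L, a ≠ 0 → b ≠ 0 → c ≠ 0 → a + b = c →
        heightProjK L a b c ≤ (1 + ε) * radK L a b c + 2 * logDiscK L + κ) :
    ∀ (L : Type) [Field L] [NumberField L], Module.finrank ℚ L ≤ δ →
      ∀ S : Finset (HeightOneSpectrum (𝓞 L)), ∀ u : L, u ≠ 0 → u ≠ 1 →
        (∀ v : HeightOneSpectrum (𝓞 L), v ∉ S → vIntK L v u = 0) →
        (∀ v : HeightOneSpectrum (𝓞 L), v ∉ S → vIntK L v (1 - u) = 0) →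
        height1K L u ≤ (1 / (1 - ε)) * (∑ v ∈ S, logNormK L v)
          + (2 / (1 - ε)) * logDiscK L + κ := by
  intro L _ _ hdeg S u hu0 hu1 hu hu'
  have habc_u := habc L hdeg u (1 - u) 1 hu0 (sub_ne_zero.mpr hu1.symm) one_ne_zero (by ring)
  have hrad : (1 + ε) * radK L u (1 - u) 1 ≤ 1 / (1 - ε) * ∑ v ∈ S, logNormK L v :=
    (mul_le_mul_of_nonneg_left (radK_one_sub_one_le_sum_logNormK hu hu') (by linarith)).trans
      (mul_le_mul_of_nonneg_right (one_add_le_one_div_one_sub hε1)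
        (Finset.sum_nonneg fun v _ => logNormK_nonneg v))
  have hdisc : 2 * logDiscK L ≤ 2 / (1 - ε) * logDiscK L :=
    mul_le_mul_of_nonneg_right (le_div_self zero_le_two (by linarith) (by linarith))
      (logDiscK_nonneg L)
  linarith [height1K_le_heightProjK_one_sub_one hu hu']

/-- **Uniform (Masser-type) abc implies the discriminant-explicit effective Siegel bound for
`ℙ¹ ∖ {0,1,∞}`.** Fix `0 < ε < 1` and `δ ≥ 1`, and assume there is `κ` such that for every
number field `L` of degree `≤ δ` and all nonzero `a, b, c ∈ L` with `a + b = c`,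
`h_L(a:b:c) ≤ (1+ε)·rad_L(a:b:c) + 2·log d_L + κ`. Then for every such `L`, every finite set
`S` of nonzero prime ideals of `O_L` and every `u ∈ L ∖ {0,1}` with `u` and `1 - u`
`S`-units, `h_L(u:1) ≤ (1/(1-ε))·∑_{𝔮 ∈ S} log N(𝔮) + (2/(1-ε))·log d_L + κ`. -/
theorem uniform_abc_implies_effective_siegel
    (ε : ℝ) (hε0 : 0 < ε) (hε1 : ε < 1) (δ : ℕ) (hδ : 1 ≤ δ) (κ : ℝ)
    (habc : ∀ (L : Type) [Field L] [NumberField L], Module.finrank ℚ L ≤ δ →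
      ∀ a b c : L, a ≠ 0 → b ≠ 0 → c ≠ 0 → a + b = c →
        heightProjK L a b c ≤ (1 + ε) * radK L a b c + 2 * logDiscK L + κ) :
    ∀ (L : Type) [Field L] [NumberField L], Module.finrank ℚ L ≤ δ →
      ∀ S : Finset (HeightOneSpectrum (𝓞 L)), ∀ u : L, u ≠ 0 → u ≠ 1 →
        (∀ v : HeightOneSpectrum (𝓞 L), v ∉ S → vIntK L v u = 0) →
        (∀ v : HeightOneSpectrum (𝓞 L), v ∉ S → vIntK L v (1 - u) = 0) →
        height1K L u ≤ (1 / (1 - ε)) * (∑ v ∈ S, logNormK L v)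
          + (2 / (1 - ε)) * logDiscK L + κ :=
  uniform_abc_implies_effective_siegel_general ε hε0 hε1 δ κ habc
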